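/- Let |Ψ⟩ be an n-qubit pure stabilizer state with stabilizer group S ⊆ G^n (a self-dual subspace, with sign function ε : S → {±1}, so that σ(f)|Ψ⟩ = ε(f)|Ψ⟩ for all f ∈ S). Suppose the qubits are distributed among parties M, and S is generated by its co-local subgroups: S = Σ_{α∈M} S_{α̂}. Then |Ψ⟩⟨Ψ| is the unique density operator ρ on (C^2)^{⊗n} satisfying Tr_α(ρ) = Tr_α(|Ψ⟩⟨Ψ|) for every α ∈ M, where Tr_α is the partial trace over party α's qubits. -/

import Mathlib

/-- The phase space of `ι`-indexed qubits: `G^ι = (F_2 × F_2)^ι`. -/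
abbrev PV (ι : Type*) := ι → ZMod 2 × ZMod 2

/-- The standard symplectic form `ω(f,g) = Σ_j (f_j^x g_j^z + f_j^z g_j^x)`. -/
noncomputable def sympForm (ι : Type*) [Fintype ι] :
    LinearMap.BilinForm (ZMod 2) (PV ι) :=
  LinearMap.mk₂ (ZMod 2)
    (fun f g => ∑ j, ((f j).1 * (g j).2 + (f j).2 * (g j).1))
    (fun m₁ m₂ g => by
      rw [← Finset.sum_add_distrib]
      exact Finset.sum_congr rfl fun j _ => by
        simp only [Pi.add_apply, Prod.fst_add, Prod.snd_add]; ring)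
    (fun c m g => by
      simp only [Pi.smul_apply, Prod.smul_fst, Prod.smul_snd, smul_eq_mul]
      rw [Finset.mul_sum]
      exact Finset.sum_congr rfl fun j _ => by ring)
    (fun m g₁ g₂ => by
      rw [← Finset.sum_add_distrib]
      exact Finset.sum_congr rfl fun j _ => by
        simp only [Pi.add_apply, Prod.fst_add, Prod.snd_add]; ring)
    (fun c m g => by
      simp only [Pi.smul_apply, Prod.smul_fst, Prod.smul_snd, smul_eq_mul]
      rw [Finset.mul_sum]
      exact Finset.sum_congr rfl fun j _ => by ring)

/-- The restriction of the symplectic form to the coordinates in `A`: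
`ω(f_A, g_A)`. -/
def sympOn {ι : Type*} (A : Finset ι) (f g : PV ι) : ZMod 2 :=
  ∑ j ∈ A, ((f j).1 * (g j).2 + (f j).2 * (g j).1)

/-- The set of qubits owned by party `α`. -/
def partySet {ι M : Type*} [Fintype ι] [DecidableEq M] (party : ι → M) (α : M) :
    Finset ι := Finset.univ.filter (fun j => party j = α)

/-- The local subspace `G^n_α` of vectors supported on party `α`'s qubits. -/
def localSub {ι M : Type*} (party : ι → M) (α : M) :
    Submodule (ZMod 2) (PV ι) where
  carrier := {f | ∀ j, party j ≠ α → f j = 0}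
  add_mem' := fun hf hg j hj => by
    simp only [Pi.add_apply, hf j hj, hg j hj, add_zero]
  zero_mem' := fun j _ => rfl
  smul_mem' := fun c f hf j hj => by
    simp only [Pi.smul_apply, hf j hj, smul_zero]

/-- The co-local subgroup `S_α̂` of elements of `S` acting trivially on party `α`. -/
def colocalSub {ι M : Type*} (S : Submodule (ZMod 2) (PV ι)) (party : ι → M) (α : M) :
    Submodule (ZMod 2) (PV ι) :=
  S ⊓ { carrier := {f | ∀ j, party j = α → f j = 0}
        add_mem' := fun hf hg j hj => by
          simp only [Pi.add_apply, hf j hj, hg j hj, add_zero]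
        zero_mem' := fun j _ => rfl
        smul_mem' := fun c f hf j hj => by
          simp only [Pi.smul_apply, hf j hj, smul_zero] }

/-- `S_loc`, the sum of all co-local subgroups of `S`. -/
def Sloc {ι M : Type*} (S : Submodule (ZMod 2) (PV ι)) (party : ι → M) :
    Submodule (ZMod 2) (PV ι) :=
  ⨆ α : M, colocalSub S party α

/-- The subspace `L_α = {f ∈ G^n_α : ω(f, S_loc) = 0}`. -/
noncomputable def Lsub {ι M : Type*} [Fintype ι] (S : Submodule (ZMod 2) (PV ι))
    (party : ι → M) (α : M) : Submodule (ZMod 2) (PV ι) :=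
  localSub party α ⊓ LinearMap.BilinForm.orthogonal (sympForm ι) (Sloc S party)

/-- The single-qubit Pauli matrix `σ_{ab}` labeled by `(a, b) ∈ F_2 × F_2`:
`σ_{00} = I`, `σ_{10} = σ^x`, `σ_{01} = σ^z`, `σ_{11} = σ^y`. -/
noncomputable def pauli (v : ZMod 2 × ZMod 2) : Matrix (Fin 2) (Fin 2) ℂ :=
  if v = (0, 0) then !![1, 0; 0, 1]
  else if v = (1, 0) then !![0, 1; 1, 0]
  else if v = (0, 1) then !![1, 0; 0, -1]
  else !![0, -Complex.I; Complex.I, 0]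

/-- The multi-qubit Pauli operator `σ(f)`, the tensor product of the `pauli (f j)`
over all qubits `j` (written entrywise). -/
noncomputable def pauliOp {ι : Type*} [Fintype ι] (f : PV ι) :
    Matrix (ι → Fin 2) (ι → Fin 2) ℂ :=
  fun x y => ∏ j, pauli (f j) (x j) (y j)

/-- The density matrix `|ψ⟩⟨ψ|` of a pure state `ψ`. -/
noncomputable def pureDensity {ι : Type*} (ψ : (ι → Fin 2) → ℂ) :
    Matrix (ι → Fin 2) (ι → Fin 2) ℂ :=
  fun x y => ψ x * (starRingEnd ℂ) (ψ y)

/-- Partial trace over the qubits in `A` of an operator on `ι`-indexed qubits. -/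
noncomputable def ptraceOut {ι : Type*} [Fintype ι] [DecidableEq ι] (A : Finset ι)
    (ρ : Matrix (ι → Fin 2) (ι → Fin 2) ℂ) :
    Matrix ({j : ι // j ∉ A} → Fin 2) ({j : ι // j ∉ A} → Fin 2) ℂ :=
  fun x y => ∑ z : {j : ι // j ∈ A} → Fin 2,
    ρ (fun j => if h : j ∈ A then z ⟨j, h⟩ else x ⟨j, h⟩)
      (fun j => if h : j ∈ A then z ⟨j, h⟩ else y ⟨j, h⟩)

/-- The von Neumann entropy `S(ρ) = −Tr ρ log ρ` of a Hermitian matrix, computed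
through its eigenvalues (and junk value `0` on non-Hermitian matrices). -/
noncomputable def vNEntropy {κ : Type*} [Fintype κ] [DecidableEq κ]
    (ρ : Matrix κ κ ℂ) : ℝ :=
  if h : ρ.IsHermitian then ∑ i, Real.negMulLog (h.eigenvalues i) else 0

open scoped ComplexOrder


section Aux
open Matrix
variable {ι : Type*} [Fintype ι] [DecidableEq ι]

/-- The sign character on `F₂`. -/
noncomputable def sgnChar : ZMod 2 → ℂ := fun a => if a = 0 then 1 else -1

lemma pv_cases : ∀ v : ZMod 2 × ZMod 2,
    v = (0,0) ∨ v = (1,0) ∨ v = (0,1) ∨ v = (1,1) := by decide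

lemma sgnChar_add : ∀ a b : ZMod 2, sgnChar (a + b) = sgnChar a * sgnChar b := by
  have h : ∀ a : ZMod 2, a = 0 ∨ a = 1 := by decide
  intro a b
  rcases h a with ha|ha <;> rcases h b with hb|hb <;> subst ha hb <;>
    · simp (config := { decide := true }) [sgnChar] <;> norm_num

lemma sgnChar_sum (s : Finset ι) (h : ι → ZMod 2) :
    ∏ j ∈ s, sgnChar (h j) = sgnChar (∑ j ∈ s, h j) := by
  induction s using Finset.cons_induction with
  | empty => simp [sgnChar]
  | cons a s ha ih => rw [Finset.prod_cons, Finset.sum_cons, ih, sgnChar_add]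

lemma pauli_zero : pauli 0 = 1 := by
  have h : ((0 : ZMod 2 × ZMod 2)) = (0,0) := rfl
  rw [pauli, if_pos h]
  ext i j; fin_cases i <;> fin_cases j <;> simp [Matrix.one_apply]

lemma pauli_mul_self (v : ZMod 2 × ZMod 2) : pauli v * pauli v = 1 := by
  rcases pv_cases v with h|h|h|h <;> subst h <;>
    · ext i j
      fin_cases i <;> fin_cases j <;>
        simp (config := { decide := true }) [pauli, Matrix.mul_apply,
          Matrix.one_apply, Fin.sum_univ_two, Complex.I_mul_I]

lemma pauli_conjT (v : ZMod 2 × ZMod 2) : (pauli v)ᴴ = pauli v := by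
  rcases pv_cases v with h|h|h|h <;> subst h <;>
    · ext i j
      fin_cases i <;> fin_cases j <;>
        simp (config := { decide := true }) [pauli, Matrix.conjTranspose_apply]

lemma pauli_comm (v w : ZMod 2 × ZMod 2) :
    pauli v * pauli w = sgnChar (v.1 * w.2 + v.2 * w.1) • (pauli w * pauli v) := by
  rcases pv_cases v with hv|hv|hv|hv <;> rcases pv_cases w with hw|hw|hw|hw <;>
    subst hv hw <;>
    · ext i j
      fin_cases i <;> fin_cases j <;>
        simp (config := { decide := true }) [pauli, sgnChar, Matrix.mul_apply,
          Matrix.smul_apply, Fin.sum_univ_two] <;> ring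

lemma pauli_mul (v w : ZMod 2 × ZMod 2) :
    ∃ c : ℂ, c ≠ 0 ∧ pauli v * pauli w = c • pauli (v + w) := by
  have key : ∀ c : ℂ, c ≠ 0 → pauli v * pauli w = c • pauli (v + w) →
      ∃ c : ℂ, c ≠ 0 ∧ pauli v * pauli w = c • pauli (v + w) :=
    fun c h1 h2 => ⟨c, h1, h2⟩
  rcases pv_cases v with hv|hv|hv|hv <;> rcases pv_cases w with hw|hw|hw|hw <;>
    subst hv hw <;>
    first
      | (refine key 1 one_ne_zero ?_
         ext i j
         fin_cases i <;> fin_cases j <;>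
           simp (config := { decide := true }) [pauli, Matrix.mul_apply,
             Matrix.smul_apply, Fin.sum_univ_two, Complex.I_mul_I, mul_comm]
         done)
      | (refine key (-1) (neg_ne_zero.mpr one_ne_zero) ?_
         ext i j
         fin_cases i <;> fin_cases j <;>
           simp (config := { decide := true }) [pauli, Matrix.mul_apply,
             Matrix.smul_apply, Fin.sum_univ_two, Complex.I_mul_I, mul_comm]
         done)
      | (refine key Complex.I Complex.I_ne_zero ?_
         ext i j
         fin_cases i <;> fin_cases j <;>
           simp (config := { decide := true }) [pauli, Matrix.mul_apply,
             Matrix.smul_apply, Fin.sum_univ_two, Complex.I_mul_I, mul_comm]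
         done)
      | (refine key (-Complex.I) (neg_ne_zero.mpr Complex.I_ne_zero) ?_
         ext i j
         fin_cases i <;> fin_cases j <;>
           simp (config := { decide := true }) [pauli, Matrix.mul_apply,
             Matrix.smul_apply, Fin.sum_univ_two, Complex.I_mul_I, mul_comm]
         done)

lemma pauli_sum_entries (a b x y : Fin 2) :
    ∑ v : ZMod 2 × ZMod 2, pauli v a b * pauli v x y
      = if a = y ∧ b = x then 2 else 0 := by
  rw [show (Finset.univ : Finset (ZMod 2 × ZMod 2)) = {(0,0),(1,0),(0,1),(1,1)}
    from by decide]
  fin_cases a <;> fin_cases b <;> fin_cases x <;> fin_cases y <;>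
    simp (config := { decide := true }) [pauli, Finset.sum_insert,
      Complex.ext_iff] <;> norm_num

end Aux
section Aux2
open Matrix
variable {ι : Type*} [Fintype ι] [DecidableEq ι]

lemma prod_ite_one {κ : Type*} [Fintype κ] (z w : κ → Fin 2) :
    (∏ j, if z j = w j then (1:ℂ) else 0) = if z = w then 1 else 0 := by
  by_cases h : z = w
  · subst h; simp
  · rw [if_neg h]
    obtain ⟨j, hj⟩ := Function.ne_iff.mp h
    exact Finset.prod_eq_zero (Finset.mem_univ j) (if_neg hj)

lemma prod_one_entry (x y : ι → Fin 2) :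
    (∏ j, (1 : Matrix (Fin 2) (Fin 2) ℂ) (x j) (y j)) = if x = y then 1 else 0 := by
  simp only [Matrix.one_apply]
  by_cases h : x = y
  · subst h; simp
  · rw [if_neg h]
    obtain ⟨j, hj⟩ := Function.ne_iff.mp h
    exact Finset.prod_eq_zero (Finset.mem_univ j) (if_neg hj)

lemma pauliOp_apply (f : PV ι) (x y : ι → Fin 2) :
    pauliOp f x y = ∏ j, pauli (f j) (x j) (y j) := rfl

lemma pauliOp_zero : pauliOp (0 : PV ι) = 1 := by
  ext x y
  rw [pauliOp_apply]
  simp only [Pi.zero_apply, pauli_zero]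
  rw [prod_one_entry, Matrix.one_apply]

lemma pauliOp_mul_apply (f g : PV ι) (x y : ι → Fin 2) :
    (pauliOp f * pauliOp g) x y = ∏ j, (pauli (f j) * pauli (g j)) (x j) (y j) := by
  rw [Matrix.mul_apply]
  calc ∑ z : ι → Fin 2, pauliOp f x z * pauliOp g z y
      = ∑ z : ι → Fin 2, ∏ j, (pauli (f j) (x j) (z j) * pauli (g j) (z j) (y j)) := by
        refine Finset.sum_congr rfl fun z _ => ?_
        rw [pauliOp_apply, pauliOp_apply, Finset.prod_mul_distrib]
    _ = ∏ j, ∑ w : Fin 2, pauli (f j) (x j) w * pauli (g j) w (y j) :=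
        (Fintype.prod_sum (κ := fun _ => Fin 2)
          (fun j w => pauli (f j) (x j) w * pauli (g j) w (y j))).symm
    _ = ∏ j, (pauli (f j) * pauli (g j)) (x j) (y j) :=
        Finset.prod_congr rfl fun j _ => (Matrix.mul_apply).symm

lemma pauliOp_mul_self (f : PV ι) : pauliOp f * pauliOp f = 1 := by
  ext x y
  rw [pauliOp_mul_apply]
  simp only [pauli_mul_self]
  rw [prod_one_entry, Matrix.one_apply]

lemma pauliOp_conjT (f : PV ι) : (pauliOp f)ᴴ = pauliOp f := by
  ext x y
  rw [Matrix.conjTranspose_apply, pauliOp_apply, pauliOp_apply]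
  rw [show (star (∏ j, pauli (f j) (y j) (x j)) : ℂ)
      = ∏ j, star (pauli (f j) (y j) (x j)) from map_prod (starRingEnd ℂ) _ _]
  refine Finset.prod_congr rfl fun j _ => ?_
  have := congrFun (congrFun (pauli_conjT (f j)) (x j)) (y j)
  rwa [Matrix.conjTranspose_apply] at this

lemma pauliOp_mul (f g : PV ι) :
    ∃ c : ℂ, c ≠ 0 ∧ pauliOp f * pauliOp g = c • pauliOp (f + g) := by
  choose c h0 hc using fun j => pauli_mul (f j) (g j)
  refine ⟨∏ j, c j, Finset.prod_ne_zero_iff.mpr (fun j _ => h0 j), ?_⟩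
  ext x y
  rw [pauliOp_mul_apply, Matrix.smul_apply, pauliOp_apply, smul_eq_mul]
  calc ∏ j, (pauli (f j) * pauli (g j)) (x j) (y j)
      = ∏ j, (c j * pauli ((f + g) j) (x j) (y j)) := by
        refine Finset.prod_congr rfl fun j _ => ?_
        rw [hc j]
        rw [show ((f + g) j) = f j + g j from rfl, Matrix.smul_apply, smul_eq_mul]
    _ = (∏ j, c j) * ∏ j, pauli ((f + g) j) (x j) (y j) := Finset.prod_mul_distrib

lemma sympForm_apply (f g : PV ι) :
    sympForm ι f g = ∑ j, ((f j).1 * (g j).2 + (f j).2 * (g j).1) := rfl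

lemma sympForm_symm (f g : PV ι) : sympForm ι f g = sympForm ι g f := by
  rw [sympForm_apply, sympForm_apply]
  exact Finset.sum_congr rfl fun j _ => by ring

lemma pauliOp_commRel (f g : PV ι) :
    pauliOp f * pauliOp g = sgnChar (sympForm ι f g) • (pauliOp g * pauliOp f) := by
  ext x y
  rw [pauliOp_mul_apply, Matrix.smul_apply, pauliOp_mul_apply, smul_eq_mul]
  calc ∏ j, (pauli (f j) * pauli (g j)) (x j) (y j)
      = ∏ j, (sgnChar ((f j).1 * (g j).2 + (f j).2 * (g j).1) *
          (pauli (g j) * pauli (f j)) (x j) (y j)) := by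
        refine Finset.prod_congr rfl fun j _ => ?_
        rw [pauli_comm (f j) (g j), Matrix.smul_apply, smul_eq_mul]
    _ = (∏ j, sgnChar ((f j).1 * (g j).2 + (f j).2 * (g j).1)) *
          ∏ j, (pauli (g j) * pauli (f j)) (x j) (y j) := Finset.prod_mul_distrib
    _ = sgnChar (sympForm ι f g) * ∏ j, (pauli (g j) * pauli (f j)) (x j) (y j) := by
        rw [sgnChar_sum, ← sympForm_apply]

lemma prod_ite_two (p : ι → Prop) [DecidablePred p] :
    (∏ j, if p j then (2:ℂ) else 0)
      = if ∀ j, p j then (2:ℂ) ^ Fintype.card ι else 0 := by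
  by_cases h : ∀ j, p j
  · rw [if_pos h, Finset.prod_congr rfl fun j _ => if_pos (h j)]
    simp [Finset.prod_const, Finset.card_univ]
  · rw [if_neg h]
    push_neg at h
    obtain ⟨j, hj⟩ := h
    exact Finset.prod_eq_zero (Finset.mem_univ j) (if_neg hj)

lemma pauliOp_sum_entries (a b x y : ι → Fin 2) :
    ∑ g : PV ι, pauliOp g a b * pauliOp g x y
      = if a = y ∧ b = x then (2:ℂ) ^ Fintype.card ι else 0 := by
  calc ∑ g : PV ι, pauliOp g a b * pauliOp g x y
      = ∑ g : PV ι, ∏ j, (pauli (g j) (a j) (b j) * pauli (g j) (x j) (y j)) := by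
        refine Finset.sum_congr rfl fun g _ => ?_
        rw [pauliOp_apply, pauliOp_apply, Finset.prod_mul_distrib]
    _ = ∏ j, ∑ v : ZMod 2 × ZMod 2, pauli v (a j) (b j) * pauli v (x j) (y j) :=
        (Fintype.prod_sum (κ := fun _ => ZMod 2 × ZMod 2)
          (fun j v => pauli v (a j) (b j) * pauli v (x j) (y j))).symm
    _ = ∏ j, if a j = y j ∧ b j = x j then (2:ℂ) else 0 :=
        Finset.prod_congr rfl fun j _ => pauli_sum_entries _ _ _ _
    _ = if ∀ j, a j = y j ∧ b j = x j then (2:ℂ) ^ Fintype.card ι else 0 :=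
        prod_ite_two _
    _ = if a = y ∧ b = x then (2:ℂ) ^ Fintype.card ι else 0 := by
        congr 1
        simp [funext_iff, forall_and]

lemma pauliOp_expansion (X : Matrix (ι → Fin 2) (ι → Fin 2) ℂ)
    (hX : ∀ g : PV ι, (pauliOp g * X).trace = 0) : X = 0 := by
  ext x y
  have h1 : ∑ g : PV ι, (pauliOp g * X).trace * pauliOp g x y
      = (2:ℂ) ^ Fintype.card ι * X x y := by
    have expand : ∀ g : PV ι, (pauliOp g * X).trace
        = ∑ a : ι → Fin 2, ∑ b : ι → Fin 2, pauliOp g a b * X b a := by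
      intro g; simp [Matrix.trace, Matrix.diag, Matrix.mul_apply]
    calc ∑ g : PV ι, (pauliOp g * X).trace * pauliOp g x y
        = ∑ g : PV ι, ∑ a : ι → Fin 2, ∑ b : ι → Fin 2,
            X b a * (pauliOp g a b * pauliOp g x y) := by
          refine Finset.sum_congr rfl fun g _ => ?_
          rw [expand g, Finset.sum_mul]
          refine Finset.sum_congr rfl fun a _ => ?_
          rw [Finset.sum_mul]
          refine Finset.sum_congr rfl fun b _ => by ring
      _ = ∑ a : ι → Fin 2, ∑ b : ι → Fin 2,
            X b a * ∑ g : PV ι, pauliOp g a b * pauliOp g x y := by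
          rw [Finset.sum_comm]
          refine Finset.sum_congr rfl fun a _ => ?_
          rw [Finset.sum_comm]
          refine Finset.sum_congr rfl fun b _ => ?_
          rw [Finset.mul_sum]
      _ = (2:ℂ) ^ Fintype.card ι * X x y := by
          simp only [pauliOp_sum_entries, mul_ite, mul_zero, ← ite_and]
          simp only [ite_and]
          rw [Finset.sum_comm]
          simp [Finset.sum_ite_eq, mul_comm]
  have h0 : ∑ g : PV ι, (pauliOp g * X).trace * pauliOp g x y = 0 := by
    simp [hX]
  rw [h0] at h1
  have h2 : ((2:ℂ) ^ Fintype.card ι) ≠ 0 := pow_ne_zero _ two_ne_zero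
  simpa [Matrix.zero_apply] using (mul_eq_zero.mp h1.symm).resolve_left h2

end Aux2
section Aux3
open Matrix
variable {ι : Type*} [Fintype ι] [DecidableEq ι]

lemma trace_pauliOp_mul_of_support (A : Finset ι) (f : PV ι)
    (hf : ∀ j ∈ A, f j = 0) (X : Matrix (ι → Fin 2) (ι → Fin 2) ℂ) :
    (pauliOp f * X).trace =
      ∑ u : {j : ι // j ∉ A} → Fin 2, ∑ v : {j : ι // j ∉ A} → Fin 2,
        (∏ j : {j : ι // j ∉ A}, pauli (f j.1) (u j) (v j)) * ptraceOut A X v u := by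
  classical
  set e : (({j : ι // j ∈ A} → Fin 2) × ({j : ι // j ∉ A} → Fin 2)) ≃ (ι → Fin 2) :=
    (Equiv.piEquivPiSubtypeProd (fun j => j ∈ A) (fun _ => Fin 2)).symm with he
  have heval : ∀ (z : {j : ι // j ∈ A} → Fin 2) (u : {j : ι // j ∉ A} → Fin 2) (j : ι),
      e (z, u) j = if h : j ∈ A then z ⟨j, h⟩ else u ⟨j, h⟩ := fun z u j => rfl
  have hσ : ∀ (z w : {j : ι // j ∈ A} → Fin 2) (u v : {j : ι // j ∉ A} → Fin 2),
      pauliOp f (e (z, u)) (e (w, v)) =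
        (if z = w then (1:ℂ) else 0) * ∏ j : {j : ι // j ∉ A}, pauli (f j.1) (u j) (v j) := by
    intro z w u v
    rw [pauliOp_apply]
    rw [← Fintype.prod_subtype_mul_prod_subtype (fun j => j ∈ A)
      (fun j => pauli (f j) (e (z, u) j) (e (w, v) j))]
    congr 1
    · have step : ∀ j : {j : ι // j ∈ A},
          pauli (f j.1) (e (z, u) j.1) (e (w, v) j.1) = if z j = w j then 1 else 0 := by
        intro j
        rw [heval, heval, dif_pos j.2, dif_pos j.2, hf j.1 j.2, pauli_zero,
          Matrix.one_apply]
      rw [Finset.prod_congr rfl (fun j _ => step j)]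
      have h := prod_ite_one z w
      convert h using 2
      exact congrArg (fun i => @Finset.univ _ i) (Subsingleton.elim _ _)
    · refine Finset.prod_congr rfl fun j _ => ?_
      rw [heval, heval, dif_neg j.2, dif_neg j.2]
  have hpt : ∀ (u v : {j : ι // j ∉ A} → Fin 2),
      ptraceOut A X v u = ∑ z : {j : ι // j ∈ A} → Fin 2, X (e (z, v)) (e (z, u)) := by
    intro u v
    rfl
  calc (pauliOp f * X).trace
      = ∑ x : ι → Fin 2, ∑ b : ι → Fin 2, pauliOp f x b * X b x := by
        simp [Matrix.trace, Matrix.diag, Matrix.mul_apply]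
    _ = ∑ p : ({j : ι // j ∈ A} → Fin 2) × ({j : ι // j ∉ A} → Fin 2),
          ∑ q : ({j : ι // j ∈ A} → Fin 2) × ({j : ι // j ∉ A} → Fin 2),
          pauliOp f (e p) (e q) * X (e q) (e p) := by
        rw [← Equiv.sum_comp e (fun x => ∑ b : ι → Fin 2, pauliOp f x b * X b x)]
        refine Finset.sum_congr rfl fun p _ => ?_
        rw [← Equiv.sum_comp e (fun b => pauliOp f (e p) b * X b (e p))]
    _ = ∑ z : {j : ι // j ∈ A} → Fin 2, ∑ u : {j : ι // j ∉ A} → Fin 2,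
          ∑ w : {j : ι // j ∈ A} → Fin 2, ∑ v : {j : ι // j ∉ A} → Fin 2,
          ((if z = w then (1:ℂ) else 0) *
            ∏ j : {j : ι // j ∉ A}, pauli (f j.1) (u j) (v j)) * X (e (w, v)) (e (z, u)) := by
        rw [Fintype.sum_prod_type]
        refine Finset.sum_congr rfl fun z _ => Finset.sum_congr rfl fun u _ => ?_
        rw [Fintype.sum_prod_type]
        refine Finset.sum_congr rfl fun w _ => Finset.sum_congr rfl fun v _ => ?_
        rw [hσ]
    _ = ∑ z : {j : ι // j ∈ A} → Fin 2, ∑ u : {j : ι // j ∉ A} → Fin 2,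
          ∑ v : {j : ι // j ∉ A} → Fin 2,
          (∏ j : {j : ι // j ∉ A}, pauli (f j.1) (u j) (v j)) * X (e (z, v)) (e (z, u)) := by
        refine Finset.sum_congr rfl fun z _ => Finset.sum_congr rfl fun u _ => ?_
        rw [Finset.sum_comm]
        simp [Finset.sum_ite_eq, ite_mul, zero_mul]
    _ = ∑ u : {j : ι // j ∉ A} → Fin 2, ∑ v : {j : ι // j ∉ A} → Fin 2,
          (∏ j : {j : ι // j ∉ A}, pauli (f j.1) (u j) (v j)) * ptraceOut A X v u := by
        rw [Finset.sum_comm]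
        refine Finset.sum_congr rfl fun u _ => ?_
        rw [Finset.sum_comm]
        refine Finset.sum_congr rfl fun v _ => ?_
        rw [hpt, Finset.mul_sum]

lemma psd_trace_zero {κ : Type*} [Fintype κ] [DecidableEq κ]
    {B : Matrix κ κ ℂ} (hB : B.PosSemidef) (htr : B.trace = 0) : B = 0 := by
  classical
  obtain ⟨s, hsH, hss⟩ : ∃ s : Matrix κ κ ℂ, sᴴ = s ∧ s * s = B := by
    open scoped MatrixOrder in
    obtain ⟨X, hX, -, hXX⟩ :=
      CFC.exists_sqrt_of_isSelfAdjoint_of_quasispectrumRestricts hB.isHermitian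
        (QuasispectrumRestricts.nnreal_of_nonneg (Matrix.PosSemidef.nonneg hB))
    exact ⟨X, hX.star_eq, hXX⟩
  have htr2 : (B.trace : ℂ) = ((∑ i : κ, ∑ j : κ, Complex.normSq (s i j) : ℝ) : ℂ) := by
    rw [← hss]
    simp only [Matrix.trace, Matrix.diag, Matrix.mul_apply]
    push_cast
    refine Finset.sum_congr rfl fun i _ => Finset.sum_congr rfl fun j _ => ?_
    have hji : s j i = (starRingEnd ℂ) (s i j) := by
      have h := congrFun (congrFun hsH i) j
      rw [Matrix.conjTranspose_apply] at h
      calc s j i = star (star (s j i)) := (star_star _).symm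
        _ = (starRingEnd ℂ) (s i j) := by rw [h]; rfl
    rw [hji, Complex.mul_conj]
  rw [htr] at htr2
  have hzero : (∑ i : κ, ∑ j : κ, Complex.normSq (s i j) : ℝ) = 0 := by
    exact_mod_cast htr2.symm
  have hterm : ∀ i j, Complex.normSq (s i j) = 0 := by
    intro i j
    have h1 := (Finset.sum_eq_zero_iff_of_nonneg (fun i _ =>
      Finset.sum_nonneg fun j _ => Complex.normSq_nonneg _)).mp hzero i (Finset.mem_univ i)
    exact (Finset.sum_eq_zero_iff_of_nonneg (fun j _ =>
      Complex.normSq_nonneg _)).mp h1 j (Finset.mem_univ j)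
  have hs0 : s = 0 := by
    ext i j
    exact Complex.normSq_eq_zero.mp (hterm i j)
  rw [← hss, hs0, Matrix.mul_zero]

lemma eigen_of_trace {κ : Type*} [Fintype κ] [DecidableEq κ]
    (σ : Matrix κ κ ℂ) (hσH : σᴴ = σ) (hσ2 : σ * σ = 1)
    (ρ : Matrix κ κ ℂ) (hρ : ρ.PosSemidef) (htr : ρ.trace = 1) (u : ℂ)
    (hu : u = 1 ∨ u = -1) (h : (σ * ρ).trace = u) : σ * ρ = u • ρ := by
  classical
  have huu : u * u = 1 := by rcases hu with h|h <;> subst h <;> ring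
  have hustar : star u = u := by rcases hu with h|h <;> subst h <;> simp
  set N : Matrix κ κ ℂ := (2:ℂ)⁻¹ • (1 - u • σ) with hN
  have hNH : Nᴴ = N := by
    rw [hN, Matrix.conjTranspose_smul, Matrix.conjTranspose_sub,
      Matrix.conjTranspose_smul, Matrix.conjTranspose_one, hσH, hustar]
    congr 1
    simp [Complex.star_def, map_inv₀]
  have hTT : (u • σ) * (u • σ) = 1 := by
    rw [Matrix.smul_mul, Matrix.mul_smul, smul_smul, huu, hσ2, one_smul]
  have hNN : N * N = N := by
    have expand : ((1 : Matrix κ κ ℂ) - u • σ) * (1 - u • σ)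
        = (2:ℂ) • (1 - u • σ) := by
      simp only [Matrix.sub_mul, Matrix.mul_sub, Matrix.one_mul,
        Matrix.mul_one, hTT, two_smul]
      abel
    rw [hN, Matrix.smul_mul, Matrix.mul_smul, smul_smul, expand, smul_smul]
    norm_num
  have htrN : (N * ρ).trace = 0 := by
    rw [hN, Matrix.smul_mul, Matrix.sub_mul, Matrix.one_mul, Matrix.smul_mul]
    rw [Matrix.trace_smul, Matrix.trace_sub, Matrix.trace_smul, h, htr]
    simp [smul_eq_mul, huu]
  have hpsdN : (N * ρ * Nᴴ).PosSemidef := hρ.mul_mul_conjTranspose_same N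
  have htrN2 : (N * ρ * Nᴴ).trace = 0 := by
    rw [hNH, Matrix.trace_mul_cycle, hNN, htrN]
  have hzero : N * ρ * Nᴴ = 0 := psd_trace_zero hpsdN htrN2
  obtain ⟨s, hsH, hss⟩ : ∃ s : Matrix κ κ ℂ, sᴴ = s ∧ s * s = ρ := by
    open scoped MatrixOrder in
    obtain ⟨X, hX, -, hXX⟩ :=
      CFC.exists_sqrt_of_isSelfAdjoint_of_quasispectrumRestricts hρ.isHermitian
        (QuasispectrumRestricts.nnreal_of_nonneg (Matrix.PosSemidef.nonneg hρ))
    exact ⟨X, hX.star_eq, hXX⟩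
  have hNs : (N * s) * (N * s)ᴴ = 0 := by
    rw [Matrix.conjTranspose_mul, hsH, hNH]
    have e1 : N * s * (s * N) = N * ρ * N := by
      rw [Matrix.mul_assoc N s (s * N), ← Matrix.mul_assoc s s N, hss,
        ← Matrix.mul_assoc]
    have hz := hzero
    rw [hNH] at hz
    rw [e1, hz]
  have hNs0 : N * s = 0 := by
    have := Matrix.conjTranspose_mul_self_eq_zero (A := (N * s)ᴴ)
    rw [Matrix.conjTranspose_conjTranspose] at this
    exact Matrix.conjTranspose_eq_zero.mp (this.mp hNs)
  have hNρ : N * ρ = 0 := by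
    rw [← hss, ← Matrix.mul_assoc, hNs0, Matrix.zero_mul]
  have key : ρ - u • (σ * ρ) = 0 := by
    have h2 : (2:ℂ) • (N * ρ) = ρ - u • (σ * ρ) := by
      rw [hN, Matrix.smul_mul, smul_smul]
      norm_num
      rw [Matrix.sub_mul, Matrix.one_mul, Matrix.smul_mul]
    rw [← h2, hNρ, smul_zero]
  have : ρ = u • (σ * ρ) := by rwa [sub_eq_zero] at key
  calc σ * ρ = (u * u) • (σ * ρ) := by rw [huu, one_smul]
    _ = u • (u • (σ * ρ)) := by rw [smul_smul]
    _ = u • ρ := by rw [← this]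

lemma trace_zero_of_anticomm (f g : PV ι) (X : Matrix (ι → Fin 2) (ι → Fin 2) ℂ)
    (hXH : Xᴴ = X) (lam : ℂ) (hlam : lam = 1 ∨ lam = -1)
    (hfX : pauliOp f * X = lam • X) (hω : sympForm ι f g = 1) :
    (pauliOp g * X).trace = 0 := by
  have hlam0 : lam ≠ 0 := by rcases hlam with h|h <;> subst h <;> norm_num
  have hlamstar : star lam = lam := by rcases hlam with h|h <;> subst h <;> simp
  have hXf : X * pauliOp f = lam • X := by
    have := congrArg Matrix.conjTranspose hfX
    rw [Matrix.conjTranspose_mul, pauliOp_conjT, hXH, Matrix.conjTranspose_smul, hXH,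
      hlamstar] at this
    exact this
  have hanti : pauliOp g * pauliOp f = - (pauliOp f * pauliOp g) := by
    rw [pauliOp_commRel g f, sympForm_symm g f, hω]
    rw [show sgnChar (1 : ZMod 2) = -1 from by
      simp [sgnChar, show (1 : ZMod 2) ≠ 0 from by decide]]
    rw [neg_one_smul]
  have step : lam * (pauliOp g * X).trace = - (lam * (pauliOp g * X).trace) := by
    calc lam * (pauliOp g * X).trace
        = (pauliOp g * (pauliOp f * X)).trace := by
          rw [hfX, Matrix.mul_smul, Matrix.trace_smul, smul_eq_mul]
      _ = ((pauliOp g * pauliOp f) * X).trace := by rw [Matrix.mul_assoc]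
      _ = - ((pauliOp f * (pauliOp g * X)).trace) := by
          rw [hanti, Matrix.neg_mul, Matrix.trace_neg, Matrix.mul_assoc]
      _ = - ((pauliOp g * X * pauliOp f).trace) := by
          rw [Matrix.trace_mul_comm]
      _ = - ((pauliOp g * (X * pauliOp f)).trace) := by rw [Matrix.mul_assoc]
      _ = - (lam * (pauliOp g * X).trace) := by
          rw [hXf, Matrix.mul_smul, Matrix.trace_smul, smul_eq_mul]
  have ha : lam * (pauliOp g * X).trace = 0 := by
    linear_combination step / 2
  exact (mul_eq_zero.mp ha).resolve_left hlam0

end Aux3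
section Aux4
open Matrix
variable {ι : Type*} [Fintype ι] [DecidableEq ι]

lemma pureDensity_conjT (ψ : (ι → Fin 2) → ℂ) :
    (pureDensity ψ)ᴴ = pureDensity ψ := by
  ext x y
  simp [pureDensity, Matrix.conjTranspose_apply, mul_comm]

lemma trace_pureDensity (ψ : (ι → Fin 2) → ℂ)
    (hnorm : ∑ x, Complex.normSq (ψ x) = 1) : (pureDensity ψ).trace = 1 := by
  have : (pureDensity ψ).trace = ((∑ x, Complex.normSq (ψ x) : ℝ) : ℂ) := by
    simp only [Matrix.trace, Matrix.diag, pureDensity]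
    push_cast
    exact Finset.sum_congr rfl fun x _ => (Complex.mul_conj _)
  rw [this, hnorm]
  norm_num

lemma pauliOp_mul_pureDensity (f : PV ι) (ψ : (ι → Fin 2) → ℂ) (c : ℂ)
    (h : (pauliOp f).mulVec ψ = c • ψ) :
    pauliOp f * pureDensity ψ = c • pureDensity ψ := by
  ext x y
  rw [Matrix.mul_apply, Matrix.smul_apply]
  simp only [pureDensity]
  calc ∑ b : ι → Fin 2, pauliOp f x b * (ψ b * (starRingEnd ℂ) (ψ y))
      = (∑ b : ι → Fin 2, pauliOp f x b * ψ b) * (starRingEnd ℂ) (ψ y) := by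
        rw [Finset.sum_mul]
        exact Finset.sum_congr rfl fun b _ => by ring
    _ = ((pauliOp f).mulVec ψ x) * (starRingEnd ℂ) (ψ y) := rfl
    _ = c * (ψ x * (starRingEnd ℂ) (ψ y)) := by rw [h]; simp [mul_assoc]
    _ = c • (ψ x * (starRingEnd ℂ) (ψ y)) := rfl

end Aux4

/-- If the stabilizer group `S` of an `n`-qubit stabilizer state
`|Ψ⟩` is generated by its co-local subgroups, then `|Ψ⟩⟨Ψ|` is the unique density
operator with the same partial trace over every single party as `|Ψ⟩⟨Ψ|`. -/
theorem stabilizer_state_unique_compatible {n : ℕ} {M : Type*} [Fintype M]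
    [DecidableEq M] (party : Fin n → M)
    (S : Submodule (ZMod 2) (PV (Fin n)))
    (hsd : S = LinearMap.BilinForm.orthogonal (sympForm (Fin n)) S)
    (hgen : S = ⨆ α : M, colocalSub S party α)
    (ψ : (Fin n → Fin 2) → ℂ)
    (hnorm : ∑ x, Complex.normSq (ψ x) = 1)
    (ε : PV (Fin n) → ℂ) (hε : ∀ f ∈ S, ε f = 1 ∨ ε f = -1)
    (hstab : ∀ f ∈ S, (pauliOp f).mulVec ψ = ε f • ψ)
    (ρ : Matrix (Fin n → Fin 2) (Fin n → Fin 2) ℂ)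
    (hpsd : ρ.PosSemidef) (htr : ρ.trace = 1)
    (hmarg : ∀ α : M, ptraceOut (partySet party α) ρ =
      ptraceOut (partySet party α) (pureDensity ψ)) :
    ρ = pureDensity ψ := by
  classical
  have hPH := pureDensity_conjT ψ
  have htrP : (pureDensity ψ).trace = 1 := trace_pureDensity ψ hnorm
  have hρH : Matrix.conjTranspose ρ = ρ := hpsd.1
  have hρne : ρ ≠ 0 := fun h => by rw [h] at htr; simp at htr
  have hSP : ∀ f ∈ S, pauliOp f * pureDensity ψ = ε f • pureDensity ψ :=
    fun f hf => pauliOp_mul_pureDensity f ψ (ε f) (hstab f hf)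
  have hco : ∀ (α : M) (f : PV (Fin n)), f ∈ colocalSub S party α →
      (pauliOp f * ρ).trace = ε f := by
    intro α f hf
    rw [colocalSub, Submodule.mem_inf] at hf
    have hsupp : ∀ j ∈ partySet party α, f j = 0 := by
      intro j hj
      exact hf.2 j (by simpa [partySet] using hj)
    rw [trace_pauliOp_mul_of_support _ f hsupp ρ]
    simp only [hmarg α]
    rw [← trace_pauliOp_mul_of_support _ f hsupp (pureDensity ψ)]
    rw [hSP f hf.1, Matrix.trace_smul, htrP, smul_eq_mul, mul_one]
  have hQ : ∀ f ∈ ⨆ α : M, colocalSub S party α,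
      ∃ lam : ℂ, pauliOp f * ρ = lam • ρ ∧
        pauliOp f * pureDensity ψ = lam • pureDensity ψ := by
    intro f hf
    refine Submodule.iSup_induction (motive := fun f => ∃ lam : ℂ,
        pauliOp f * ρ = lam • ρ ∧
          pauliOp f * pureDensity ψ = lam • pureDensity ψ) _ hf ?_ ?_ ?_
    · intro α g hg
      have hgS : g ∈ S := by
        rw [colocalSub, Submodule.mem_inf] at hg
        exact hg.1
      refine ⟨ε g, ?_, hSP g hgS⟩
      exact eigen_of_trace _ (pauliOp_conjT g) (pauliOp_mul_self g) ρ hpsd htr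
        (ε g) (hε g hgS) (hco α g hg)
    · exact ⟨1, by simp [pauliOp_zero], by simp [pauliOp_zero]⟩
    · rintro x y ⟨l, hx1, hx2⟩ ⟨m, hy1, hy2⟩
      obtain ⟨c, hc0, hc⟩ := pauliOp_mul x y
      have hxy : pauliOp (x + y) = c⁻¹ • (pauliOp x * pauliOp y) := by
        rw [hc, smul_smul, inv_mul_cancel₀ hc0, one_smul]
      have comb : ∀ (Y : Matrix (Fin n → Fin 2) (Fin n → Fin 2) ℂ) (l' m' : ℂ),
          pauliOp x * Y = l' • Y → pauliOp y * Y = m' • Y →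
          pauliOp (x + y) * Y = (c⁻¹ * (l' * m')) • Y := by
        intro Y l' m' h1 h2
        rw [hxy, Matrix.smul_mul, Matrix.mul_assoc, h2, Matrix.mul_smul, h1,
          smul_smul, smul_smul]
        congr 1
        ring
      exact ⟨c⁻¹ * (l * m), comb ρ l m hx1 hy1, comb (pureDensity ψ) l m hx2 hy2⟩
  have hQ' : ∀ f ∈ S, ∃ lam : ℂ, (lam = 1 ∨ lam = -1) ∧
      pauliOp f * ρ = lam • ρ ∧
        pauliOp f * pureDensity ψ = lam • pureDensity ψ := by
    intro f hfS
    obtain ⟨lam, h1, h2⟩ := hQ f (hgen ▸ hfS)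
    have hll : lam * lam = 1 := by
      have e : ρ = (lam * lam) • ρ := by
        calc ρ = 1 * ρ := (Matrix.one_mul ρ).symm
          _ = (pauliOp f * pauliOp f) * ρ := by rw [pauliOp_mul_self]
          _ = pauliOp f * (pauliOp f * ρ) := Matrix.mul_assoc _ _ _
          _ = lam • (lam • ρ) := by rw [h1, Matrix.mul_smul, h1]
          _ = (lam * lam) • ρ := smul_smul _ _ _
      by_contra hne
      have hz : ((lam * lam) - 1) • ρ = 0 := by
        rw [sub_smul, one_smul, ← e, sub_self]
      rcases smul_eq_zero.mp hz with h|h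
      · exact hne (by rwa [sub_eq_zero] at h)
      · exact hρne h
    exact ⟨lam, mul_self_eq_one_iff.mp hll, h1, h2⟩
  have htreq : ∀ g : PV (Fin n),
      (pauliOp g * ρ).trace = (pauliOp g * pureDensity ψ).trace := by
    intro g
    by_cases hg : g ∈ S
    · obtain ⟨lam, _, h1, h2⟩ := hQ' g hg
      rw [h1, h2, Matrix.trace_smul, Matrix.trace_smul, htr, htrP]
    · have hex : ∃ f ∈ S, sympForm (Fin n) f g = 1 := by
        by_contra hcon
        push_neg at hcon
        apply hg
        rw [hsd, LinearMap.BilinForm.mem_orthogonal_iff]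
        intro f hf
        have h1 := hcon f hf
        have h01 : ∀ a : ZMod 2, a ≠ 1 → a = 0 := by decide
        exact h01 _ h1
      obtain ⟨f, hfS, hω⟩ := hex
      obtain ⟨lam, hl, h1, h2⟩ := hQ' f hfS
      rw [trace_zero_of_anticomm f g ρ hρH lam hl h1 hω,
        trace_zero_of_anticomm f g (pureDensity ψ) hPH lam hl h2 hω]
  have hdiff : ρ - pureDensity ψ = 0 := by
    apply pauliOp_expansion
    intro g
    rw [Matrix.mul_sub, Matrix.trace_sub, htreq g, sub_self]
  exact sub_eq_zero.mp hdiff
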